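/- Let p be an odd prime, s, m ≥ 1 with p^m ≡ 3 (mod 4), α a nonzero non-square in F_{p^m}, β ∈ F_{p^m} nonzero, R = F_{p^m}[u]/⟨u²⟩, and α₀ ∈ F_{p^m} with α₀^{p^s} = α. In the ring 𝓡 = R[x]/⟨x^{4p^s} - (α+βu)⟩, the element x^4 - α₀ is nilpotent with nilpotency index exactly 2p^s, and the ideal generated by (x^4-α₀)^{p^s} equals the ideal generated by u. -/

import Mathlib

/-!
In characteristic `p`, Frobenius gives `(x⁴ - α₀)^{p^s} = x^{4p^s} - α = βu` in `𝓡`, so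
`(x⁴ - α₀)^{2p^s} = β²u² = 0`. On the other hand `(x⁴ - α₀)^{2p^s-1} = βu · (x⁴ - α₀)^{p^s-1}`
is represented by a nonzero polynomial of degree `4(p^s - 1) < 4p^s`, hence is nonzero modulo the
monic polynomial `x^{4p^s} - (α + βu)`. Since `β` is a unit, `βu` and `u` generate the same ideal.
-/

open Polynomial

/-- The chain ring `R = F_{p^m}[u]/⟨u²⟩`. -/
abbrev Ru (K : Type) [Field K] : Type := K[X] ⧸ Ideal.span {(X : K[X]) ^ 2}

noncomputable instance (K : Type) [Field K] : CommRing (Ru K) := Ideal.Quotient.commRing _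

/-- The element `u` of `R`. -/
noncomputable def uR (K : Type) [Field K] : Ru K :=
  Ideal.Quotient.mk _ (X : K[X])

/-- The natural inclusion of `F_{p^m}` into `R`. -/
noncomputable def tR (K : Type) [Field K] (a : K) : Ru K :=
  Ideal.Quotient.mk _ (C a : K[X])

/-- The ambient ring `R[x]/⟨xⁿ - λ⟩` of `λ`-constacyclic codes of length `n` over `R`. -/
abbrev RC (K : Type) [Field K] (lam : Ru K) (n : ℕ) : Type :=
  (Ru K)[X] ⧸ Ideal.span {(X : (Ru K)[X]) ^ n - C lam}

/-- The canonical projection `R[x] → R[x]/⟨xⁿ - λ⟩`. -/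
noncomputable def mkC (K : Type) [Field K] (lam : Ru K) (n : ℕ) :
    (Ru K)[X] →+* RC K lam n :=
  Ideal.Quotient.mk _

namespace AdjoinRoot

variable {A : Type*} [CommRing A]

theorem mk_X_pow_sub_C_pow_expChar_pow (p : ℕ) [ExpChar A p] (d s : ℕ) (a₀ b : A) :
    mk (X ^ (d * p ^ s) - C (a₀ ^ p ^ s + b)) ((X ^ d - C a₀) ^ p ^ s) =
      mk (X ^ (d * p ^ s) - C (a₀ ^ p ^ s + b)) (C b) := by
  rw [sub_pow_expChar_pow, ← pow_mul, ← C_pow, mk_eq_mk]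
  exact dvd_of_eq (by rw [C_add]; ring)

theorem mk_C_mul_ne_zero_of_monic {f g : A[X]} (hf : f.Monic) (hg : g.Monic) {b : A} (hb : b ≠ 0)
    (hd : g.natDegree < f.natDegree) : mk f (C b * g) ≠ 0 :=
  mk_ne_zero_of_natDegree_lt hf (hg.mul_left_ne_zero (C_ne_zero.2 hb))
    (natDegree_C_mul_le b g |>.trans_lt hd)

end AdjoinRoot

section DualNumbers

variable {K : Type} [Field K]

theorem tR_eq_algebraMap : tR K = algebraMap K (Ru K) := rfl

instance : Nontrivial (Ru K) :=
  AdjoinRoot.nontrivial (X ^ 2 : K[X]) (by rw [degree_X_pow]; decide)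

instance (p : ℕ) [CharP K p] : CharP (Ru K) p :=
  charP_of_injective_algebraMap (algebraMap K (Ru K)).injective p

theorem uR_sq : uR K ^ 2 = 0 :=
  (map_pow (AdjoinRoot.mk (X ^ 2 : K[X])) X 2).symm.trans AdjoinRoot.mk_self

theorem tR_mul_uR_ne_zero {β : K} (hβ : β ≠ 0) : tR K β * uR K ≠ 0 := by
  have h := AdjoinRoot.mk_ne_zero_of_degree_lt (monic_X_pow 2)
    (mul_ne_zero (C_ne_zero.2 hβ) X_ne_zero) (by rw [degree_C_mul_X hβ, degree_X_pow]; decide)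
  rwa [map_mul] at h

end DualNumbers

theorem stmt9 (p s m : ℕ) (hp : p.Prime)
    (K : Type) [Field K] [Fintype K] (hK : Fintype.card K = p ^ m)
    (α β : K) (hβ : β ≠ 0)
    (α₀ : K) (hα₀ : α₀ ^ p ^ s = α) :
    (mkC K (tR K α + tR K β * uR K) (4 * p ^ s)
        (X ^ 4 - C (tR K α₀)) ^ (2 * p ^ s) = 0) ∧
    (mkC K (tR K α + tR K β * uR K) (4 * p ^ s)
        (X ^ 4 - C (tR K α₀)) ^ (2 * p ^ s - 1) ≠ 0) ∧
    Ideal.span {mkC K (tR K α + tR K β * uR K) (4 * p ^ s)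
        ((X ^ 4 - C (tR K α₀)) ^ p ^ s)} =
      Ideal.span {mkC K (tR K α + tR K β * uR K) (4 * p ^ s) (C (uR K))} := by
  have : Fact p.Prime := ⟨hp⟩
  have : CharP K p := charP_of_card_eq_prime_pow hK
  set q := p ^ s
  set b := tR K β * uR K
  have hα : tR K α = tR K α₀ ^ q := by rw [← hα₀, tR_eq_algebraMap, map_pow]
  -- `mkC K lam n` is `AdjoinRoot.mk (X ^ n - C lam)` by definition.
  have key : mkC K (tR K α + b) (4 * q) ((X ^ 4 - C (tR K α₀)) ^ q) =
      mkC K (tR K α + b) (4 * q) (C b) := by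
    rw [hα]
    exact AdjoinRoot.mk_X_pow_sub_C_pow_expChar_pow p 4 s _ b
  refine ⟨?_, ?_, ?_⟩
  · rw [pow_mul', ← map_pow, key, ← map_pow, ← C_pow, mul_pow, uR_sq, mul_zero, C_0,
      map_zero]
  · have hq : 0 < q := pow_pos hp.pos s
    rw [← map_pow, show 2 * q - 1 = q + (q - 1) by omega, pow_add, map_mul, key, ← map_mul]
    refine AdjoinRoot.mk_C_mul_ne_zero_of_monic (monic_X_pow_sub_C _ (by omega))
      ((monic_X_pow_sub_C _ (by norm_num)).pow _) (tR_mul_uR_ne_zero hβ) ?_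
    rw [(monic_X_pow_sub_C _ (by norm_num)).natDegree_pow, natDegree_X_pow_sub_C,
      natDegree_X_pow_sub_C]
    omega
  · rw [key, C_mul, map_mul]
    exact Ideal.span_singleton_mul_left_unit
      ((((isUnit_iff_ne_zero.2 hβ).map (algebraMap K (Ru K))).map C).map (mkC _ _ _)) _
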